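/- arXiv:1305.1965 — 8 statements merged into one kernel-verified Lean document; each statement's English description precedes it below -/
import Mathlib

section
/- Let R be a commutative unital ring and let A ∈ M̂₃(R) ∩ dom(Φ²), i.e. A ∈ Ŝ. Then A ⋆ Φ(A) ⋆ Φ²(A) = 1 and A ⋆ Φ(A) ⋆ Φ⁻¹(A) = 1, where ⋆ denotes the Hadamard (entrywise) product of matrices and 1 is the 3×3 matrix all of whose entries equal 1. -/
open Matrix

section KontsevichDefs

variable {R : Type*} [Ring R]

/-- `J₂`: the transposed Hadamard inverse, `J₂(M)_{jk} = (M_{kj})⁻¹`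
(with `Ring.inverse`, which is the two-sided inverse on units and `0` elsewhere). -/
noncomputable def J2 {m : Type*} (M : Matrix m m R) : Matrix m m R :=
  Matrix.of fun j k => Ring.inverse (M k j)

variable {m : Type*} [Fintype m] [DecidableEq m]

/-- `J = J₂ ∘ J₁`, where `J₁(M) = M⁻¹` is the usual matrix inverse. -/
noncomputable def Jmap (M : Matrix m m R) : Matrix m m R := J2 (Ring.inverse M)

/-- `J⁻¹ = J₁ ∘ J₂`. -/
noncomputable def JinvMap (M : Matrix m m R) : Matrix m m R := Ring.inverse (J2 M)

/-- `dom(J)`: `M` invertible and all entries of `M⁻¹` invertible. -/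
def domJ (M : Matrix m m R) : Prop :=
  IsUnit M ∧ ∀ j k, IsUnit (Ring.inverse M j k)

/-- `dom(J⁻¹)`: all entries of `M` invertible and `J₂(M)` invertible. -/
def domJinv (M : Matrix m m R) : Prop :=
  (∀ j k, IsUnit (M j k)) ∧ IsUnit (J2 M)

/-- `dom(Jⁿ)` defined recursively: `M ∈ dom(Jⁿ⁺¹)` iff `M ∈ dom(J)` and `J(M) ∈ dom(Jⁿ)`. -/
def domJpow : ℕ → Matrix m m R → Prop
  | 0, _ => True
  | n + 1, M => domJ M ∧ domJpow n (Jmap M)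

/-- `A ∼ B`: `B = D₁⁻¹ A D₂` for diagonal matrices `D₁, D₂` with invertible diagonal entries. -/
def simRel (A B : Matrix m m R) : Prop :=
  ∃ d₁ d₂ : m → Rˣ,
    B = Matrix.diagonal (fun i => (((d₁ i)⁻¹ : Rˣ) : R)) * A *
        Matrix.diagonal (fun i => ((d₂ i : Rˣ) : R))

/-- entrywise conjugation `x⁻¹ A x` by an invertible ring element. -/
def conjEntry {m' : Type*} (x : Rˣ) (A : Matrix m' m' R) : Matrix m' m' R :=
  Matrix.of fun j k => ((x⁻¹ : Rˣ) : R) * A j k * (x : R)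

/-- `M̂ₙ(R)`: first row and first column consist entirely of `1`'s. -/
def Mhat {m' : Type*} [Zero m'] (A : Matrix m' m' R) : Prop :=
  ∀ k, A 0 k = 1 ∧ A k 0 = 1

/-- `Λ^L(A)_{jk} = a₁₁ a_{j1}⁻¹ a_{jk} a_{1k}⁻¹`. -/
noncomputable def LamL {m' : Type*} [Zero m'] (A : Matrix m' m' R) : Matrix m' m' R :=
  Matrix.of fun j k => A 0 0 * Ring.inverse (A j 0) * A j k * Ring.inverse (A 0 k)

/-- `Λ^R(A)_{jk} = a_{j1}⁻¹ a_{jk} a_{1k}⁻¹ a₁₁`. -/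
noncomputable def LamR {m' : Type*} [Zero m'] (A : Matrix m' m' R) : Matrix m' m' R :=
  Matrix.of fun j k => Ring.inverse (A j 0) * A j k * Ring.inverse (A 0 k) * A 0 0

/-- `Φ(A) = J₂(Λ^L(A⁻¹))`. -/
noncomputable def Phi [Zero m] (A : Matrix m m R) : Matrix m m R := J2 (LamL (Ring.inverse A))

/-- `dom(Φ)`: `A ∈ M̂ₙ(R)`, all entries of `A` invertible, `A` invertible,
all entries of `A⁻¹` invertible. -/
def domPhi [Zero m] (A : Matrix m m R) : Prop :=
  Mhat A ∧ (∀ j k, IsUnit (A j k)) ∧ IsUnit A ∧ ∀ j k, IsUnit (Ring.inverse A j k)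

/-- `Φ⁻¹(B) = Λ^R(J⁻¹(B)) = Λ^R((J₂ B)⁻¹)`. -/
noncomputable def PhiInv [Zero m] (B : Matrix m m R) : Matrix m m R := LamR (Ring.inverse (J2 B))

/-- `dom(Φ⁻¹)`: `B ∈ M̂ₙ(R)`, all entries of `B` invertible, `J₂(B)` invertible,
all entries of `J₂(B)⁻¹` invertible. -/
def domPhiInv [Zero m] (B : Matrix m m R) : Prop :=
  Mhat B ∧ (∀ j k, IsUnit (B j k)) ∧ IsUnit (J2 B) ∧ ∀ j k, IsUnit (Ring.inverse (J2 B) j k)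

/-- `dom(Φⁿ)` defined recursively. -/
def domPhipow [Zero m] : ℕ → Matrix m m R → Prop
  | 0, _ => True
  | n + 1, A => domPhi A ∧ domPhipow n (Phi A)

/-- `Ψ = J₂ ∘ Φ ∘ J₂`. -/
noncomputable def Psi [Zero m] (A : Matrix m m R) : Matrix m m R := J2 (Phi (J2 A))

/-- `dom(Ψ)`: `A ∈ M̂ₙ(R)`, all entries of `A` invertible, `J₂(A) ∈ dom(Φ)`. -/
def domPsi [Zero m] (A : Matrix m m R) : Prop :=
  Mhat A ∧ (∀ j k, IsUnit (A j k)) ∧ domPhi (J2 A)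

/-- every square submatrix (equinumerous injective choices of rows and columns) is invertible. -/
def allSquareSubInv (M : Matrix (Fin 3) (Fin 3) R) : Prop :=
  ∀ (k : ℕ) (r c : Fin k → Fin 3), Function.Injective r → Function.Injective c →
    IsUnit (M.submatrix r c)

/-- only the `1×1` and `2×2` submatrices are required to be invertible. -/
def sub12Inv (M : Matrix (Fin 3) (Fin 3) R) : Prop :=
  (∀ j k, IsUnit (M j k)) ∧
  ∀ (r c : Fin 2 → Fin 3), Function.Injective r → Function.Injective c →
    IsUnit (M.submatrix r c)

/-- `S`: all square submatrices of `M` are invertible and `J₂(M)` is invertible. -/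
def Sset (R : Type*) [Ring R] : Set (Matrix (Fin 3) (Fin 3) R) :=
  {M | allSquareSubInv M ∧ IsUnit (J2 M)}

/-- `Ŝ = S ∩ M̂₃(R)`. -/
def Shat (R : Type*) [Ring R] : Set (Matrix (Fin 3) (Fin 3) R) :=
  {M | M ∈ Sset R ∧ Mhat M}

end KontsevichDefs

/-!
`Λ^L(A)_{jk} = a₁₁ a_{j1}⁻¹ a_{jk} a_{1k}⁻¹` is a cross-ratio of entries, so it is unchanged when
rows and columns are rescaled by units (`simRel`); in particular it ignores the scalar `det⁻¹` in
`A⁻¹ = det⁻¹ • adj A`, so `Φ A = J₂ (Λ^L (adj A))` and `Φ⁻¹ A = Λ^L (adj (J₂ A))`.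

For a `3 × 3` matrix `X` with invertible entries, every entry of `adj (J₂ X)` is a `2 × 2` minor
of entrywise inverses, `x⁻¹ w⁻¹ - y⁻¹ z⁻¹ = -(x w - y z) / (x y z w)`, hence
`adj (J₂ X) ∼ (J₂ X ⊙ adj X)ᵀ`. Together with Jacobi's identity `adj (adj A) = det A • A` this
gives, for `A ∈ M̂₃(R)` and `K = Λ^L (adj A)`,
`Φ A = J₂ K`, `Φ² A = J₂ ((J₂ K ⊙ A)ᵀ)` and `Φ⁻¹ A = (J₂ A ⊙ K)ᵀ`,
and both Hadamard products collapse entrywise to `1`.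
That `Φ A` is again invertible comes from the polynomial identity
`det (J₂ (adj X)) · ∏ adj X = -(det X)² · det (J₂ X) · ∏ X`.
-/

open Finset
open scoped Ring

section

variable {R : Type*} [CommRing R] {n : Type*}

section LamL

variable [Zero n]

theorem LamR_eq_LamL (A : Matrix n n R) : LamR A = LamL A := by
  ext j k
  simp only [LamR, LamL, of_apply]
  ring

theorem LamL_transpose (A : Matrix n n R) : LamL Aᵀ = (LamL A)ᵀ := by
  ext j k
  simp only [LamL, transpose_apply, of_apply]
  ring

theorem LamL_hadamard (A B : Matrix n n R) : LamL (A ⊙ B) = LamL A ⊙ LamL B := by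
  ext j k
  simp only [LamL, hadamard_apply, of_apply, Ring.mul_inverse_rev]
  ring

theorem LamL_J2 (A : Matrix n n R) : LamL (J2 A) = J2 (LamL A) := by
  ext j k
  simp only [LamL, J2, of_apply, Ring.mul_inverse_rev]
  ring

theorem LamL_of_Mhat {A : Matrix n n R} (hA : Mhat A) : LamL A = A := by
  ext j k
  simp [LamL, (hA 0).1, (hA j).2, (hA k).1]

theorem isUnit_LamL_apply {A : Matrix n n R} (hA : ∀ j k, IsUnit (A j k)) (j k : n) :
    IsUnit (LamL A j k) := by
  simp only [LamL, of_apply]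
  exact (((hA 0 0).mul (hA j 0).ringInverse).mul (hA j k)).mul (hA 0 k).ringInverse

end LamL

section simRel

variable [Fintype n] [DecidableEq n]

theorem simRel_diagonal_mul_mul_diagonal {f g : n → R} (hf : ∀ i, IsUnit (f i))
    (hg : ∀ i, IsUnit (g i)) (A : Matrix n n R) : simRel A (diagonal f * A * diagonal g) :=
  ⟨fun i => (hf i).unit⁻¹, fun i => (hg i).unit, by simp⟩

theorem simRel_smul {c : R} (hc : IsUnit c) (A : Matrix n n R) : simRel A (c • A) := by
  convert simRel_diagonal_mul_mul_diagonal (fun _ => hc) (fun _ => isUnit_one) A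
  ext j k
  simp

theorem simRel.LamL_eq [Zero n] {A B : Matrix n n R} : simRel A B → LamL B = LamL A := by
  rintro ⟨d₁, d₂, rfl⟩
  ext j k
  have h₁ := fun i => (d₁ i).mul_inv
  have h₂ := fun i => (d₂ i).mul_inv
  simp only [LamL, diagonal_mul, mul_diagonal, of_apply, Ring.mul_inverse_rev, Ring.inverse_unit,
    inv_inv]
  grind

theorem simRel_LamL [Zero n] {A : Matrix n n R} (hA : ∀ j k, IsUnit (A j k)) :
    simRel A (LamL A) := by
  convert simRel_diagonal_mul_mul_diagonal (fun j => (hA 0 0).mul (hA j 0).ringInverse)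
    (fun k => (hA 0 k).ringInverse) A using 1
  ext j k
  simp [LamL, mul_assoc]

theorem simRel.J2 {A B : Matrix n n R} : simRel A B → simRel (J2 A) (J2 B) := by
  rintro ⟨d₁, d₂, rfl⟩
  refine ⟨d₂, d₁, ?_⟩
  ext j k
  simp only [_root_.J2, diagonal_mul, mul_diagonal, of_apply, Ring.mul_inverse_rev,
    Ring.inverse_unit, inv_inv]
  ring

theorem simRel.adjugate {A B : Matrix n n R} : simRel A B → simRel A.adjugate B.adjugate := by
  rintro ⟨d₁, d₂, rfl⟩
  refine ⟨fun i => (∏ j ∈ univ.erase i, d₂ j)⁻¹, fun i => ∏ j ∈ univ.erase i, (d₁ j)⁻¹, ?_⟩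
  simp only [adjugate_mul_distrib, adjugate_diagonal, Matrix.mul_assoc, Units.coe_prod, inv_inv]

theorem simRel.isUnit_det {A B : Matrix n n R} : simRel A B → IsUnit A.det → IsUnit B.det := by
  rintro ⟨d₁, d₂, rfl⟩ hA
  simp [det_mul, det_diagonal, hA]

end simRel

section Phi

variable [Fintype n] [DecidableEq n] [Zero n]

theorem Phi_eq_J2_LamL_adjugate {A : Matrix n n R} (hA : IsUnit A.det) :
    Phi A = J2 (LamL A.adjugate) := by
  rw [Phi, ← nonsing_inv_eq_ringInverse, Matrix.inv_def,
    (simRel_smul hA.ringInverse _).LamL_eq]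

theorem PhiInv_eq_LamL_adjugate_J2 {A : Matrix n n R} (hA : IsUnit (J2 A).det) :
    PhiInv A = LamL (J2 A).adjugate := by
  rw [PhiInv, LamR_eq_LamL, ← nonsing_inv_eq_ringInverse, Matrix.inv_def,
    (simRel_smul hA.ringInverse _).LamL_eq]

end Phi

theorem det_J2_mul_prod [Fintype n] [DecidableEq n] {X : Matrix n n R}
    (hX : ∀ j k, IsUnit (X j k)) :
    (J2 X).det * ∏ i, ∏ j, X i j = (of fun i j => ∏ k ∈ univ.erase j, X i k).det := by
  have hZ : (of fun i j => ∏ k ∈ univ.erase j, X i k) =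
      diagonal (fun i => ∏ j, X i j) * (J2 X)ᵀ := by
    ext i j
    rw [of_apply, diagonal_mul, transpose_apply, J2, of_apply,
      ← mul_prod_erase univ _ (mem_univ j), mul_comm (X i j), mul_assoc,
      Ring.mul_inverse_cancel _ (hX i j), mul_one]
  rw [hZ, det_mul, det_diagonal, det_transpose, mul_comm]

section Fin3

theorem det_prod_erase_adjugate (X : Matrix (Fin 3) (Fin 3) R) :
    (of fun i j => ∏ k ∈ univ.erase j, X.adjugate i k).det =
      -X.det ^ 2 * (of fun i j => ∏ k ∈ univ.erase j, X i k).det := by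
  have h₀ : univ.erase (0 : Fin 3) = {1, 2} := by decide
  have h₁ : univ.erase (1 : Fin 3) = {0, 2} := by decide
  have h₂ : univ.erase (2 : Fin 3) = {0, 1} := by decide
  simp only [det_fin_three, adjugate_fin_three, of_apply, h₀, h₁, h₂, Fin.isValue, cons_val',
    cons_val_fin_one, cons_val_zero, cons_val_one, Matrix.cons_val, mem_singleton, Fin.reduceEq,
    zero_ne_one, not_false_eq_true, prod_insert, prod_singleton]
  ring

theorem isUnit_det_J2_adjugate {X : Matrix (Fin 3) (Fin 3) R} (hX : ∀ j k, IsUnit (X j k))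
    (hadj : ∀ j k, IsUnit (X.adjugate j k)) (hdet : IsUnit X.det) (hJ : IsUnit (J2 X).det) :
    IsUnit (J2 X.adjugate).det := by
  have h := det_J2_mul_prod hadj
  rw [det_prod_erase_adjugate, ← det_J2_mul_prod hX] at h
  refine isUnit_of_mul_isUnit_left (y := ∏ i, ∏ j, X.adjugate i j) ?_
  rw [h]
  exact (hdet.pow 2).neg.mul (hJ.mul (by simp [hX]))

theorem simRel_transpose_hadamard_adjugate_J2 {X : Matrix (Fin 3) (Fin 3) R}
    (hX : ∀ j k, IsUnit (X j k)) : simRel (J2 X ⊙ X.adjugate)ᵀ (J2 X).adjugate := by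
  have hQ : IsUnit (∏ i, ∏ k, X i k) := by simp [hX]
  -- The four entries off row `j` and column `k` multiply to
  -- `(∏ X) * X j k / ((∏ row j) * (∏ column k))`.
  convert simRel_diagonal_mul_mul_diagonal
    (f := fun j => -(∏ i, ∏ k, X i k)⁻¹ʳ * ∏ k, X j k) (g := fun k => ∏ j, X j k)
    (by simp [hQ.ringInverse, hX]) (by simp [hX]) _ using 1
  have hinv := fun j k => Ring.mul_inverse_cancel _ (hX j k)
  ext j k
  fin_cases j <;> fin_cases k <;>
    simp only [_root_.J2, adjugate_fin_three, of_apply, cons_val', Matrix.cons_val, cons_val_zero,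
      cons_val_one, cons_val_fin_one, Fin.zero_eta, Fin.mk_one, Fin.reduceFinMk, Fin.isValue,
      Fin.prod_univ_three, Ring.mul_inverse_rev, neg_mul, mul_diagonal, diagonal_mul,
      transpose_apply, hadamard_apply] <;>
    grind

theorem LamL_adjugate_J2 {X : Matrix (Fin 3) (Fin 3) R} (hX : ∀ j k, IsUnit (X j k)) :
    LamL (J2 X).adjugate = (J2 (LamL X) ⊙ LamL X.adjugate)ᵀ := by
  rw [(simRel_transpose_hadamard_adjugate_J2 hX).LamL_eq, LamL_transpose, LamL_hadamard,
    LamL_J2]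

theorem Phi_Phi_eq_of_Mhat {A : Matrix (Fin 3) (Fin 3) R} (hhat : Mhat A)
    (hA : ∀ j k, IsUnit (A j k)) (hadj : ∀ j k, IsUnit (A.adjugate j k)) (hdet : IsUnit A.det)
    (hJ : IsUnit (J2 A).det) :
    Phi (Phi A) = J2 (J2 (LamL A.adjugate) ⊙ A)ᵀ := by
  set K := LamL A.adjugate
  have hKA : simRel A.adjugate K := simRel_LamL hadj
  have hJK : IsUnit (J2 K).det := hKA.J2.isUnit_det (isUnit_det_J2_adjugate hA hadj hdet hJ)
  have hLK : LamL K = K := hKA.LamL_eq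
  have hadjK : LamL K.adjugate = A := by
    rw [hKA.adjugate.LamL_eq, adjugate_adjugate _ (by simp),
      (simRel_smul (hdet.pow _) A).LamL_eq, LamL_of_Mhat hhat]
  rw [Phi_eq_J2_LamL_adjugate hdet, Phi_eq_J2_LamL_adjugate hJK,
    LamL_adjugate_J2 (isUnit_LamL_apply hadj), hLK, hadjK]

theorem PhiInv_eq_of_Mhat {A : Matrix (Fin 3) (Fin 3) R} (hhat : Mhat A)
    (hA : ∀ j k, IsUnit (A j k)) (hJ : IsUnit (J2 A).det) :
    PhiInv A = (J2 A ⊙ LamL A.adjugate)ᵀ := by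
  rw [PhiInv_eq_LamL_adjugate_J2 hJ, LamL_adjugate_J2 hA, LamL_of_Mhat hhat]

theorem allSquareSubInv.isUnit_apply {M : Matrix (Fin 3) (Fin 3) R} (hM : allSquareSubInv M)
    (j k : Fin 3) : IsUnit (M j k) := by
  have h := hM 1 ![j] ![k] (fun _ _ _ => Subsingleton.elim _ _)
    (fun _ _ _ => Subsingleton.elim _ _)
  rwa [isUnit_iff_isUnit_det, det_fin_one] at h

theorem allSquareSubInv.isUnit_det {M : Matrix (Fin 3) (Fin 3) R} (hM : allSquareSubInv M) :
    IsUnit M.det := by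
  simpa [isUnit_iff_isUnit_det] using hM 3 id id Function.injective_id Function.injective_id

theorem allSquareSubInv.isUnit_adjugate_apply {M : Matrix (Fin 3) (Fin 3) R}
    (hM : allSquareSubInv M) (j k : Fin 3) : IsUnit (M.adjugate j k) := by
  rw [adjugate_fin_succ_eq_det_submatrix]
  exact (isUnit_neg_one.pow _).mul ((isUnit_iff_isUnit_det _).mp
    (hM 2 _ _ Fin.succAbove_right_injective Fin.succAbove_right_injective))

end Fin3

end

/-- Over a commutative unital ring, for `A ∈ Ŝ = M̂₃(R) ∩ dom(Φ²)`:
`A ⋆ Φ(A) ⋆ Φ²(A) = 1` and `A ⋆ Φ(A) ⋆ Φ⁻¹(A) = 1`, where `⋆` is the Hadamard product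
and `1` is the all-ones matrix. -/
theorem hadamard_identity_commutative {R : Type*} [CommRing R]
    (A : Matrix (Fin 3) (Fin 3) R) (hA : A ∈ Shat R) :
    Matrix.hadamard (Matrix.hadamard A (Phi A)) (Phi (Phi A)) =
      Matrix.of (fun _ _ => (1 : R)) ∧
    Matrix.hadamard (Matrix.hadamard A (Phi A)) (PhiInv A) =
      Matrix.of (fun _ _ => (1 : R)) := by
  obtain ⟨⟨hsub, hJ⟩, hhat⟩ := hA
  have hunit := hsub.isUnit_apply
  have hadj := hsub.isUnit_adjugate_apply
  have hA_cancel := fun j k => Ring.mul_inverse_cancel _ (hunit j k)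
  have hK_cancel := fun j k => Ring.mul_inverse_cancel _ (isUnit_LamL_apply hadj j k)
  rw [isUnit_iff_isUnit_det] at hJ
  rw [Phi_Phi_eq_of_Mhat hhat hunit hadj hsub.isUnit_det hJ, PhiInv_eq_of_Mhat hhat hunit hJ,
    Phi_eq_J2_LamL_adjugate hsub.isUnit_det]
  constructor <;> ext j k <;>
    simp only [J2, transpose_apply, hadamard_apply, of_apply, Ring.mul_inverse_rev,
      Ring.inverse_inverse (isUnit_LamL_apply hadj _ _)] <;>
    grind
end

section
/- Let R be a unital associative ring and let A = [[a,b],[c,d]] be a 2×2 matrix over R. (i) If a, b, c, d are invertible, then the following are equivalent: A is invertible; J₂(A) is invertible; db⁻¹ − ca⁻¹ is invertible in R. (ii) If A is invertible, then all entries of A are invertible if and only if all entries of A⁻¹ are invertible. -/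
open Matrix

/-!
Pivot on an invertible entry: if `a` is invertible, then
`!![a, b; c, d] = !![1, 0; c a⁻¹, 1] * !![a, b; 0, s]` with Schur complement `s = d - c a⁻¹ b`,
so the matrix is invertible iff `s` is, and the entries of `A A⁻¹ = A⁻¹ A = 1` show that the
`(1, 1)` entry of `A⁻¹` is `s⁻¹`. When all entries are invertible, `s = (d b⁻¹ - c a⁻¹) b`, and
the Schur complement of `J₂(A) = !![a⁻¹, c⁻¹; b⁻¹, d⁻¹]` is `-d⁻¹ (d b⁻¹ - c a⁻¹) a c⁻¹`; this
gives (i). Pivoting on any entry `A i j` shows that the entry `(j', i')` of `A⁻¹` is invertible,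
where `'` swaps the two indices; this gives (ii), the converse by applying it to `A⁻¹`.
-/

section SchurComplement

variable {R : Type*} [Ring R]

theorem schur_mul_eq_one {a b c d q t : R} (ha : IsUnit a)
    (h₀ : a * q + b * t = 0) (h₁ : c * q + d * t = 1) : (d - c * Ring.inverse a * b) * t = 1 :=
  calc (d - c * Ring.inverse a * b) * t
      = (c * q + d * t) - c * Ring.inverse a * (a * q + b * t) := by
        rw [mul_add, mul_assoc c _ (a * q), Ring.inverse_mul_cancel_left _ _ ha]; noncomm_ring
    _ = 1 := by rw [h₀, h₁, mul_zero, sub_zero]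

theorem mul_schur_eq_one {a b c d r t : R} (ha : IsUnit a)
    (h₀ : r * a + t * c = 0) (h₁ : r * b + t * d = 1) : t * (d - c * Ring.inverse a * b) = 1 :=
  calc t * (d - c * Ring.inverse a * b)
      = (r * b + t * d) - (r * a + t * c) * Ring.inverse a * b := by
        rw [add_mul (r * a), Ring.mul_inverse_cancel_right _ _ ha]; noncomm_ring
    _ = 1 := by rw [h₀, h₁, zero_mul, zero_mul, sub_zero]

end SchurComplement

theorem Fin.rev_ne_self_of_two (i : Fin 2) : i.rev ≠ i := by
  fin_cases i <;> decide

namespace Matrix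

variable {R : Type*} [Ring R]

theorem mul_apply_fin_two (M N : Matrix (Fin 2) (Fin 2) R) (i j k : Fin 2) :
    (M * N) i k = M i j * N j k + M i j.rev * N j.rev k := by
  fin_cases j <;> simp [mul_apply, Fin.sum_univ_two, add_comm]

variable {M : Matrix (Fin 2) (Fin 2) R} {i j : Fin 2}

theorem schur_mul_inverse_apply_rev (hM : IsUnit M) (h : IsUnit (M i j)) :
    (M i.rev j.rev - M i.rev j * Ring.inverse (M i j) * M i j.rev) *
      Ring.inverse M j.rev i.rev = 1 := by
  have hMN := Ring.mul_inverse_cancel M hM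
  refine schur_mul_eq_one (q := Ring.inverse M j i.rev) h ?_ ?_
  · rw [← mul_apply_fin_two, hMN, one_apply_ne (Fin.rev_ne_self_of_two i).symm]
  · rw [← mul_apply_fin_two, hMN, one_apply_eq]

theorem inverse_apply_rev_mul_schur (hM : IsUnit M) (h : IsUnit (M i j)) :
    Ring.inverse M j.rev i.rev *
      (M i.rev j.rev - M i.rev j * Ring.inverse (M i j) * M i j.rev) = 1 := by
  have hNM := Ring.inverse_mul_cancel M hM
  refine mul_schur_eq_one (r := Ring.inverse M j.rev i) h ?_ ?_
  · rw [← mul_apply_fin_two, hNM, one_apply_ne (Fin.rev_ne_self_of_two j)]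
  · rw [← mul_apply_fin_two, hNM, one_apply_eq]

theorem isUnit_inverse_apply_rev (hM : IsUnit M) (h : IsUnit (M i j)) :
    IsUnit (Ring.inverse M j.rev i.rev) :=
  isUnit_iff_exists.2 ⟨_, inverse_apply_rev_mul_schur hM h, schur_mul_inverse_apply_rev hM h⟩

theorem forall_isUnit_inverse_apply_of_forall_isUnit_apply (hM : IsUnit M)
    (h : ∀ i j, IsUnit (M i j)) : ∀ i j, IsUnit (Ring.inverse M i j) := fun i j => by
  simpa using isUnit_inverse_apply_rev hM (h j.rev i.rev)

theorem forall_isUnit_inverse_apply_iff (hM : IsUnit M) :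
    (∀ i j, IsUnit (Ring.inverse M i j)) ↔ ∀ i j, IsUnit (M i j) := by
  refine ⟨fun h => ?_, forall_isUnit_inverse_apply_of_forall_isUnit_apply hM⟩
  simpa [Ring.inverse_inverse hM] using
    forall_isUnit_inverse_apply_of_forall_isUnit_apply hM.ringInverse h

theorem isUnit_lower_unitriangular_fin_two (x : R) : IsUnit !![1, 0; x, 1] :=
  isUnit_iff_exists.2 ⟨!![1, 0; -x, 1], by simp [one_fin_two], by simp [one_fin_two]⟩

theorem isUnit_upper_triangular_fin_two (u v : Rˣ) (x : R) : IsUnit !![(u : R), x; 0, v] :=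
  isUnit_iff_exists.2 ⟨!![↑u⁻¹, -(↑u⁻¹ * x * ↑v⁻¹); 0, ↑v⁻¹],
    by simp [one_fin_two, ← mul_assoc],
    by simp [one_fin_two, mul_assoc]⟩

theorem fin_two_eq_lower_mul_upper (a : Rˣ) (b c d : R) :
    !![(a : R), b; c, d] = !![1, 0; c * ↑a⁻¹, 1] * !![(a : R), b; 0, d - c * ↑a⁻¹ * b] := by
  simp [mul_assoc]

theorem isUnit_fin_two_iff_isUnit_schur {a b c d : R} (ha : IsUnit a) :
    IsUnit !![a, b; c, d] ↔ IsUnit (d - c * Ring.inverse a * b) := by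
  refine ⟨fun hM => isUnit_iff_exists.2 ⟨_, schur_mul_inverse_apply_rev (i := 0) (j := 0) hM ha,
    inverse_apply_rev_mul_schur hM ha⟩, fun ⟨s, hs⟩ => ?_⟩
  obtain ⟨a, rfl⟩ := ha
  rw [Ring.inverse_unit] at hs
  rw [fin_two_eq_lower_mul_upper, ← hs]
  exact (isUnit_lower_unitriangular_fin_two _).mul (isUnit_upper_triangular_fin_two a s b)

end Matrix

section FinTwoUnits

variable {R : Type*} [Ring R] {a b c d : R}

theorem J2_fin_two (a b c d : R) :
    J2 !![a, b; c, d] = !![Ring.inverse a, Ring.inverse c; Ring.inverse b, Ring.inverse d] := by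
  ext i j
  fin_cases i <;> fin_cases j <;> rfl

theorem isUnit_fin_two_iff_isUnit_sub (ha : IsUnit a) (hb : IsUnit b) :
    IsUnit !![a, b; c, d] ↔ IsUnit (d * Ring.inverse b - c * Ring.inverse a) := by
  obtain ⟨a, rfl⟩ := ha
  obtain ⟨b, rfl⟩ := hb
  have schur_eq : d - c * ↑a⁻¹ * b = (d * ↑b⁻¹ - c * ↑a⁻¹) * b := by
    rw [sub_mul, Units.inv_mul_cancel_right]
  simp only [isUnit_fin_two_iff_isUnit_schur a.isUnit, Ring.inverse_unit]
  rw [schur_eq, Units.isUnit_mul_units]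

theorem isUnit_J2_fin_two_iff_isUnit_sub (ha : IsUnit a) (hb : IsUnit b) (hc : IsUnit c)
    (hd : IsUnit d) :
    IsUnit (J2 !![a, b; c, d]) ↔ IsUnit (d * Ring.inverse b - c * Ring.inverse a) := by
  obtain ⟨a, rfl⟩ := ha
  obtain ⟨b, rfl⟩ := hb
  obtain ⟨c, rfl⟩ := hc
  obtain ⟨d, rfl⟩ := hd
  have schur_eq : (↑d⁻¹ - ↑b⁻¹ * ↑a * ↑c⁻¹ : R) =
      -(↑d⁻¹ * ((d * ↑b⁻¹ - c * ↑a⁻¹) * ↑(a * c⁻¹))) := by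
    simp [mul_sub, sub_mul, mul_assoc]
  rw [J2_fin_two, isUnit_fin_two_iff_isUnit_schur (by simp)]
  simp only [Ring.inverse_unit, inv_inv]
  rw [schur_eq, IsUnit.neg_iff, Units.isUnit_units_mul, Units.isUnit_mul_units]

end FinTwoUnits

/-- For a `2×2` matrix `A = [[a,b],[c,d]]` over a unital ring `R`:
(i) if `a, b, c, d` are invertible, then `A` invertible ↔ `J₂(A)` invertible ↔
`db⁻¹ − ca⁻¹` invertible in `R`;
(ii) if `A` is invertible, then all entries of `A` are invertible iff all entries of
`A⁻¹` are invertible. -/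
theorem two_by_two_invertibility {R : Type*} [Ring R] (a b c d : R) :
    ((IsUnit a ∧ IsUnit b ∧ IsUnit c ∧ IsUnit d) →
      ((IsUnit (!![a, b; c, d] : Matrix (Fin 2) (Fin 2) R) ↔
          IsUnit (J2 (!![a, b; c, d] : Matrix (Fin 2) (Fin 2) R))) ∧
       (IsUnit (!![a, b; c, d] : Matrix (Fin 2) (Fin 2) R) ↔
          IsUnit (d * Ring.inverse b - c * Ring.inverse a)))) ∧
    (IsUnit (!![a, b; c, d] : Matrix (Fin 2) (Fin 2) R) →
      ((IsUnit a ∧ IsUnit b ∧ IsUnit c ∧ IsUnit d) ↔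
        ∀ j k, IsUnit (Ring.inverse (!![a, b; c, d] : Matrix (Fin 2) (Fin 2) R) j k))) := by
  have entries_isUnit : (IsUnit a ∧ IsUnit b ∧ IsUnit c ∧ IsUnit d) ↔
      ∀ j k, IsUnit ((!![a, b; c, d] : Matrix (Fin 2) (Fin 2) R) j k) := by
    simp [Fin.forall_fin_two, and_assoc]
  refine ⟨fun ⟨ha, hb, hc, hd⟩ => ?_, fun hA => ?_⟩
  · have hA := isUnit_fin_two_iff_isUnit_sub (c := c) (d := d) ha hb
    exact ⟨hA.trans (isUnit_J2_fin_two_iff_isUnit_sub ha hb hc hd).symm, hA⟩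
  · rw [entries_isUnit, forall_isUnit_inverse_apply_iff hA]
end

section
/- Let R be a unital associative ring and let A = [[a,b],[c,d]] be a 2×2 matrix over R such that a, b, c, d are invertible and A is invertible. Then the four elements a − bd⁻¹c, c − db⁻¹a, b − ac⁻¹d and d − ca⁻¹b are invertible in R, and A⁻¹ = [[(a − bd⁻¹c)⁻¹, (c − db⁻¹a)⁻¹], [(b − ac⁻¹d)⁻¹, (d − ca⁻¹b)⁻¹]]. -/
open Matrix

section SchurComplement

variable {R : Type*} [Ring R] {a b c d p q r : R}

theorem sub_mul_inverse_mul_mul_eq_one (hd : IsUnit d) (h₁ : a * p + b * r = 1)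
    (h₂ : c * p + d * r = 0) : (a - b * Ring.inverse d * c) * p = 1 :=
  calc (a - b * Ring.inverse d * c) * p = a * p - b * (Ring.inverse d * (c * p)) := by
        noncomm_ring
    _ = a * p + b * r := by
        rw [eq_neg_of_add_eq_zero_left h₂, mul_neg, Ring.inverse_mul_cancel_left _ _ hd, mul_neg,
          sub_neg_eq_add]
    _ = 1 := h₁

theorem mul_sub_mul_inverse_mul_eq_one (hd : IsUnit d) (h₁ : p * a + q * c = 1)
    (h₂ : p * b + q * d = 0) : p * (a - b * Ring.inverse d * c) = 1 :=
  calc p * (a - b * Ring.inverse d * c) = p * a - p * b * Ring.inverse d * c := by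
        noncomm_ring
    _ = p * a + q * c := by
        rw [eq_neg_of_add_eq_zero_left h₂, neg_mul, neg_mul,
          Ring.mul_inverse_cancel_right _ _ hd, sub_neg_eq_add]
    _ = 1 := h₁

theorem isUnit_and_inverse_eq_of_mul_eq_one {z w : R} (h₁ : z * w = 1) (h₂ : w * z = 1) :
    IsUnit z ∧ Ring.inverse z = w :=
  ⟨⟨⟨z, w, h₁, h₂⟩, rfl⟩, Ring.inverse_unit ⟨z, w, h₁, h₂⟩⟩

/-- The `(1,1)` entry `p` of the inverse of `[[a, b], [c, d]]` is the inverse of the Schur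
complement of `d`; the hypotheses are the entries of `A A⁻¹ = 1` and `A⁻¹ A = 1` involving `p`. -/
theorem isUnit_sub_mul_inverse_mul_and_inverse_eq (hd : IsUnit d) (h₁ : a * p + b * r = 1)
    (h₂ : c * p + d * r = 0) (h₃ : p * a + q * c = 1) (h₄ : p * b + q * d = 0) :
    IsUnit (a - b * Ring.inverse d * c) ∧ Ring.inverse (a - b * Ring.inverse d * c) = p :=
  isUnit_and_inverse_eq_of_mul_eq_one (sub_mul_inverse_mul_mul_eq_one hd h₁ h₂)
    (mul_sub_mul_inverse_mul_eq_one hd h₃ h₄)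

end SchurComplement

theorem Matrix.mul_fin_two_eq_one_iff {α : Type*} [NonAssocSemiring α]
    (a b c d p q r s : α) :
    !![a, b; c, d] * !![p, q; r, s] = 1 ↔
      a * p + b * r = 1 ∧ a * q + b * s = 0 ∧ c * p + d * r = 0 ∧ c * q + d * s = 1 := by
  rw [Matrix.mul_fin_two, Matrix.one_fin_two, ← Matrix.ext_iff]
  simp [Fin.forall_fin_two, and_assoc]

/-- If `A = [[a,b],[c,d]]` has invertible entries and is invertible,
then `a − bd⁻¹c`, `c − db⁻¹a`, `b − ac⁻¹d`, `d − ca⁻¹b` are invertible and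
`A⁻¹ = [[(a − bd⁻¹c)⁻¹, (c − db⁻¹a)⁻¹], [(b − ac⁻¹d)⁻¹, (d − ca⁻¹b)⁻¹]]`. -/
theorem two_by_two_inverse_formula {R : Type*} [Ring R] (a b c d : R)
    (ha : IsUnit a) (hb : IsUnit b) (hc : IsUnit c) (hd : IsUnit d)
    (hA : IsUnit (!![a, b; c, d] : Matrix (Fin 2) (Fin 2) R)) :
    IsUnit (a - b * Ring.inverse d * c) ∧ IsUnit (c - d * Ring.inverse b * a) ∧
    IsUnit (b - a * Ring.inverse c * d) ∧ IsUnit (d - c * Ring.inverse a * b) ∧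
    Ring.inverse (!![a, b; c, d] : Matrix (Fin 2) (Fin 2) R) =
      !![Ring.inverse (a - b * Ring.inverse d * c), Ring.inverse (c - d * Ring.inverse b * a);
         Ring.inverse (b - a * Ring.inverse c * d), Ring.inverse (d - c * Ring.inverse a * b)] := by
  obtain ⟨p, q, r, s, hinv⟩ : ∃ p q r s : R,
      Ring.inverse (!![a, b; c, d] : Matrix (Fin 2) (Fin 2) R) = !![p, q; r, s] :=
    ⟨_, _, _, _, Matrix.eta_fin_two _⟩
  obtain ⟨e₁, e₂, e₃, e₄⟩ := (Matrix.mul_fin_two_eq_one_iff a b c d p q r s).1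
    (hinv ▸ Ring.mul_inverse_cancel _ hA)
  obtain ⟨f₁, f₂, f₃, f₄⟩ := (Matrix.mul_fin_two_eq_one_iff p q r s a b c d).1
    (hinv ▸ Ring.inverse_mul_cancel _ hA)
  -- The other three entries are the `(1,1)` entries after swapping rows and/or columns.
  obtain ⟨hp, rfl⟩ := isUnit_sub_mul_inverse_mul_and_inverse_eq hd e₁ e₃ f₁ f₂
  obtain ⟨hq, rfl⟩ := isUnit_sub_mul_inverse_mul_and_inverse_eq hb e₄ e₂
    ((add_comm _ _).trans f₁) ((add_comm _ _).trans f₂)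
  obtain ⟨hr, rfl⟩ := isUnit_sub_mul_inverse_mul_and_inverse_eq hc
    ((add_comm _ _).trans e₁) ((add_comm _ _).trans e₃) f₄ f₃
  obtain ⟨hs, rfl⟩ := isUnit_sub_mul_inverse_mul_and_inverse_eq ha
    ((add_comm _ _).trans e₄) ((add_comm _ _).trans e₂) ((add_comm _ _).trans f₄)
    ((add_comm _ _).trans f₃)
  exact ⟨hp, hq, hr, hs, hinv⟩
end

section
/- Let R be a unital associative ring, n ≥ 1, and let A = {a_{jk}} be an n×n matrix over R all of whose entries are invertible. Then Λ^L(A), defined by Λ^L(A)_{jk} = a_{11} a_{j1}⁻¹ a_{jk} a_{1k}⁻¹, is the unique matrix B ∈ M̂ₙ(R) for which there exist diagonal matrices D₁, D₂ with invertible diagonal entries and with the top-left entry of D₁ equal to 1 such that B = D₁⁻¹ A D₂. Similarly, Λ^R(A), defined by Λ^R(A)_{jk} = a_{j1}⁻¹ a_{jk} a_{1k}⁻¹ a_{11}, is the unique matrix C ∈ M̂ₙ(R) for which there exist diagonal matrices D₃, D₄ with invertible diagonal entries and with the top-left entry of D₄ equal to 1 such that C = D₃⁻¹ A D₄. In particular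 Λ^L(A) ∼ Λ^R(A) ∼ A. -/
open Matrix

private lemma diagEntry {R : Type*} [Ring R] {m : Type*} [Fintype m] [DecidableEq m]
    (d e : m → R) (A : Matrix m m R) (j k : m) :
    (Matrix.diagonal d * A * Matrix.diagonal e) j k = d j * A j k * e k := by
  rw [Matrix.mul_diagonal, Matrix.diagonal_mul]

private lemma rinvU {R : Type*} [Ring R] {a : R} (h : IsUnit a) :
    Ring.inverse a = ↑h.unit⁻¹ := by
  conv_lhs => rw [← h.unit_spec]
  exact Ring.inverse_unit _

private lemma eq_uinv_right {R : Type*} [Ring R] {x : R} {v : Rˣ} (h : (v : R) * x = 1) :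
    x = ↑v⁻¹ := by
  have := congrArg (fun y => (↑v⁻¹ : R) * y) h
  simpa [← mul_assoc] using this

private lemma eq_uinv_left {R : Type*} [Ring R] {x : R} {v : Rˣ} (h : x * (v : R) = 1) :
    x = ↑v⁻¹ := by
  have := congrArg (fun y => y * (↑v⁻¹ : R)) h
  simpa [mul_assoc] using this

/-- For an `n×n` matrix `A` with all entries invertible:
`Λ^L(A)` is the unique `B ∈ M̂ₙ(R)` of the form `B = D₁⁻¹ A D₂` with `D₁, D₂` diagonal
with invertible entries and top-left entry of `D₁` equal to `1`; similarly `Λ^R(A)` is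
the unique such `C = D₃⁻¹ A D₄` with the top-left entry of `D₄` equal to `1`.
In particular `Λ^L(A) ∼ Λ^R(A) ∼ A`. -/
theorem LamL_LamR_unique {R : Type*} [Ring R] (n : ℕ)
    (A : Matrix (Fin (n + 1)) (Fin (n + 1)) R) (hA : ∀ j k, IsUnit (A j k)) :
    (Mhat (LamL A) ∧
      (∃ d₁ d₂ : Fin (n + 1) → Rˣ, d₁ 0 = 1 ∧
        LamL A = Matrix.diagonal (fun i => (((d₁ i)⁻¹ : Rˣ) : R)) * A *
          Matrix.diagonal (fun i => ((d₂ i : Rˣ) : R))) ∧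
      ∀ B : Matrix (Fin (n + 1)) (Fin (n + 1)) R, Mhat B →
        (∃ d₁ d₂ : Fin (n + 1) → Rˣ, d₁ 0 = 1 ∧
          B = Matrix.diagonal (fun i => (((d₁ i)⁻¹ : Rˣ) : R)) * A *
            Matrix.diagonal (fun i => ((d₂ i : Rˣ) : R))) →
        B = LamL A) ∧
    (Mhat (LamR A) ∧
      (∃ d₃ d₄ : Fin (n + 1) → Rˣ, d₄ 0 = 1 ∧
        LamR A = Matrix.diagonal (fun i => (((d₃ i)⁻¹ : Rˣ) : R)) * A *
          Matrix.diagonal (fun i => ((d₄ i : Rˣ) : R))) ∧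
      ∀ C : Matrix (Fin (n + 1)) (Fin (n + 1)) R, Mhat C →
        (∃ d₃ d₄ : Fin (n + 1) → Rˣ, d₄ 0 = 1 ∧
          C = Matrix.diagonal (fun i => (((d₃ i)⁻¹ : Rˣ) : R)) * A *
            Matrix.diagonal (fun i => ((d₄ i : Rˣ) : R))) →
        C = LamR A) ∧
    simRel A (LamL A) ∧ simRel A (LamR A) ∧ simRel (LamL A) (LamR A) := by
  choose u hu using hA
  have hA' : ∀ j k, IsUnit (A j k) := fun j k => ⟨u j k, hu j k⟩
  have hL : ∀ j k, LamL A j k =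
      ↑(u 0 0) * ↑(u j 0)⁻¹ * ↑(u j k) * ↑(u 0 k)⁻¹ := by
    intro j k
    simp [LamL, ← hu, Ring.inverse_unit]
  have hR : ∀ j k, LamR A j k =
      ↑(u j 0)⁻¹ * ↑(u j k) * ↑(u 0 k)⁻¹ * ↑(u 0 0) := by
    intro j k
    simp [LamR, ← hu, Ring.inverse_unit]
  have hMhatL : Mhat (LamL A) := by
    intro k
    constructor
    · rw [hL 0 k]
      simp [Units.mul_inv_cancel_right, Units.mul_inv]
    · rw [hL k 0]
      simp [mul_assoc, Units.inv_mul_cancel_left, Units.mul_inv]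
  have hMhatR : Mhat (LamR A) := by
    intro k
    constructor
    · rw [hR 0 k]
      simp [Units.inv_mul_cancel_right, Units.inv_mul_cancel_left, Units.inv_mul]
    · rw [hR k 0]
      simp [Units.inv_mul_cancel_right, Units.inv_mul]
  have hexL : ∃ d₁ d₂ : Fin (n + 1) → Rˣ, d₁ 0 = 1 ∧
      LamL A = Matrix.diagonal (fun i => (((d₁ i)⁻¹ : Rˣ) : R)) * A *
        Matrix.diagonal (fun i => ((d₂ i : Rˣ) : R)) := by
    refine ⟨fun j => u j 0 * (u 0 0)⁻¹, fun k => (u 0 k)⁻¹, by simp, ?_⟩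
    ext j k
    rw [diagEntry, hL j k]
    simp [← hu, _root_.mul_inv_rev, mul_assoc]
  have hexR : ∃ d₃ d₄ : Fin (n + 1) → Rˣ, d₄ 0 = 1 ∧
      LamR A = Matrix.diagonal (fun i => (((d₃ i)⁻¹ : Rˣ) : R)) * A *
        Matrix.diagonal (fun i => ((d₄ i : Rˣ) : R)) := by
    refine ⟨fun j => u j 0, fun k => (u 0 k)⁻¹ * u 0 0, by simp, ?_⟩
    ext j k
    rw [diagEntry, hR j k]
    simp [← hu, mul_assoc]
  refine ⟨⟨hMhatL, hexL, ?_⟩, ⟨hMhatR, hexR, ?_⟩, ?_, ?_, ?_⟩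
  · rintro B hB ⟨d₁, d₂, h0, heq⟩
    have hBjk : ∀ j k, B j k = ↑(d₁ j)⁻¹ * A j k * ↑(d₂ k) := fun j k => by
      rw [heq, diagEntry]
    have hd₂ : ∀ k, ((d₂ k : Rˣ) : R) = ↑(u 0 k)⁻¹ := by
      intro k
      apply eq_uinv_right
      have h1 := (hB k).1
      rw [hBjk 0 k, h0] at h1
      simpa [← hu] using h1
    have hd₁ : ∀ j, ((↑(d₁ j)⁻¹ : Rˣ) : R) = ↑(u 0 0) * ↑(u j 0)⁻¹ := by
      intro j
      have h1 := (hB j).2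
      rw [hBjk j 0, hd₂ 0] at h1
      rw [← hu j 0] at h1
      have h2 : (↑(d₁ j)⁻¹ : R) * ↑(u j 0) = ↑(u 0 0) := by
        have := congrArg (fun y => y * ((u 0 0 : Rˣ) : R)) h1
        simpa [mul_assoc] using this
      have h3 := congrArg (fun y => y * (↑(u j 0)⁻¹ : R)) h2
      simpa [mul_assoc] using h3
    ext j k
    rw [hBjk j k, hd₁ j, hd₂ k, hL j k, ← hu j k]
  · rintro C hC ⟨d₃, d₄, h0, heq⟩
    have hCjk : ∀ j k, C j k = ↑(d₃ j)⁻¹ * A j k * ↑(d₄ k) := fun j k => by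
      rw [heq, diagEntry]
    have hd₃0 : ((↑(d₃ 0)⁻¹ : Rˣ) : R) = ↑(u 0 0)⁻¹ := by
      apply eq_uinv_left
      have h1 := (hC 0).2
      rw [hCjk 0 0, h0] at h1
      simpa [← hu] using h1
    have hd₄ : ∀ k, ((d₄ k : Rˣ) : R) = ↑(u 0 k)⁻¹ * ↑(u 0 0) := by
      intro k
      have h1 := (hC k).1
      rw [hCjk 0 k, hd₃0, ← hu 0 k] at h1
      have h2 : (↑(u 0 k) : R) * ↑(d₄ k) = ↑(u 0 0) := by
        have := congrArg (fun y => ((u 0 0 : Rˣ) : R) * y) h1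
        simpa [← mul_assoc] using this
      have h3 := congrArg (fun y => (↑(u 0 k)⁻¹ : R) * y) h2
      simpa [← mul_assoc] using h3
    have hd₃ : ∀ j, ((↑(d₃ j)⁻¹ : Rˣ) : R) = ↑(u j 0)⁻¹ := by
      intro j
      apply eq_uinv_left
      have h1 := (hC j).2
      rw [hCjk j 0, h0] at h1
      simpa [← hu] using h1
    ext j k
    rw [hCjk j k, hd₃ j, hd₄ k, hR j k, ← hu j k]
    simp [mul_assoc]
  · obtain ⟨d₁, d₂, _, heq⟩ := hexL
    exact ⟨d₁, d₂, heq⟩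
  · obtain ⟨d₃, d₄, _, heq⟩ := hexR
    exact ⟨d₃, d₄, heq⟩
  · refine ⟨fun _ => u 0 0, fun _ => u 0 0, ?_⟩
    ext j k
    rw [diagEntry, hL j k, hR j k]
    simp [mul_assoc, Units.inv_mul_cancel_left]
end

section
/- Let R be a unital associative ring, n ≥ 1, let D₁ and D₂ be diagonal n×n matrices over R with invertible diagonal entries, and let A, B ∈ M̂ₙ(R). Then B = D₁⁻¹ A D₂ holds if and only if there exists x ∈ R* such that D₁ = D₂ = xI (where I is the n×n identity matrix) and B = x⁻¹ A x, where x⁻¹ A x denotes the matrix with entries x⁻¹ a_{jk} x. In particular, A ∼ B if and only if there exists x ∈ R* with B = x⁻¹ A x. -/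
open Matrix

/-- Conjugacy lemma. For diagonal matrices `D₁ = diag(d₁)`,
`D₂ = diag(d₂)` with invertible entries and `A, B ∈ M̂ₙ(R)`:
`B = D₁⁻¹ A D₂` iff there is `x ∈ R*` with `D₁ = D₂ = xI` and `B = x⁻¹ A x` entrywise.
In particular `A ∼ B` iff there is `x ∈ R*` with `B = x⁻¹ A x`. -/
theorem conjugacy_lemma {R : Type*} [Ring R] (n : ℕ)
    (d₁ d₂ : Fin (n + 1) → Rˣ) (A B : Matrix (Fin (n + 1)) (Fin (n + 1)) R)
    (hA : Mhat A) (hB : Mhat B) :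
    ((B = Matrix.diagonal (fun i => (((d₁ i)⁻¹ : Rˣ) : R)) * A *
        Matrix.diagonal (fun i => ((d₂ i : Rˣ) : R))) ↔
      ∃ x : Rˣ, (∀ i, d₁ i = x ∧ d₂ i = x) ∧ B = conjEntry x A) ∧
    (simRel A B ↔ ∃ x : Rˣ, B = conjEntry x A) := by
  have main : ∀ (e₁ e₂ : Fin (n + 1) → Rˣ),
      (B = Matrix.diagonal (fun i => (((e₁ i)⁻¹ : Rˣ) : R)) * A *
        Matrix.diagonal (fun i => ((e₂ i : Rˣ) : R))) ↔
      ∃ x : Rˣ, (∀ i, e₁ i = x ∧ e₂ i = x) ∧ B = conjEntry x A := by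
    intro e₁ e₂
    constructor
    · intro h
      have hE : ∀ j k, B j k = ((e₁ j)⁻¹ : Rˣ) * A j k * (e₂ k : R) := by
        intro j k
        rw [h]
        simp [Matrix.mul_diagonal, Matrix.diagonal_mul]
      have hd₂ : ∀ k, e₂ k = e₁ 0 := by
        intro k
        have h1 := hE 0 k
        rw [(hB k).1, (hA k).1, mul_one] at h1
        refine Units.ext ?_
        calc (e₂ k : R) = (e₁ 0 : R) * (((e₁ 0)⁻¹ : Rˣ) * (e₂ k : R)) :=
              (Units.mul_inv_cancel_left _ _).symm
          _ = (e₁ 0 : R) := by rw [← h1, mul_one]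
      have hd₁ : ∀ j, e₁ j = e₁ 0 := by
        intro j
        have h1 := hE j 0
        rw [(hB j).2, (hA j).2, mul_one] at h1
        have h2 : (e₂ 0 : R) = (e₁ j : R) := by
          calc (e₂ 0 : R) = (e₁ j : R) * (((e₁ j)⁻¹ : Rˣ) * (e₂ 0 : R)) :=
                (Units.mul_inv_cancel_left _ _).symm
            _ = (e₁ j : R) := by rw [← h1, mul_one]
        have := (hd₂ 0)
        refine Units.ext ?_
        rw [← h2, this]
      refine ⟨e₁ 0, fun i => ⟨hd₁ i, hd₂ i⟩, ?_⟩
      ext j k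
      rw [conjEntry, Matrix.of_apply, hE j k, hd₁ j, hd₂ k]
    · rintro ⟨x, hx, rfl⟩
      ext j k
      simp [Matrix.mul_diagonal, Matrix.diagonal_mul, conjEntry, (hx j).1, (hx k).2]
  refine ⟨main d₁ d₂, ?_⟩
  constructor
  · rintro ⟨e₁, e₂, h⟩
    obtain ⟨x, _, hx⟩ := (main e₁ e₂).1 h
    exact ⟨x, hx⟩
  · rintro ⟨x, hx⟩
    exact ⟨fun _ => x, fun _ => x, ((main _ _).2 ⟨x, fun i => ⟨rfl, rfl⟩, hx⟩)⟩
end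

section
/- Let R be a unital associative ring and n ≥ 1. Define Φ(A) = J₂(Λ^L(A⁻¹)) with dom(Φ) = {A ∈ M̂ₙ(R) : all entries of A are invertible, A is invertible, and all entries of A⁻¹ are invertible}, and define Φ'(B) = Λ^R(J⁻¹(B)) with dom(Φ') = {B ∈ M̂ₙ(R) : all entries of B are invertible, J₂(B) is invertible, and all entries of J₂(B)⁻¹ are invertible}. Then Φ' is the inverse of Φ: Φ maps dom(Φ) bijectively onto dom(Φ'), Φ' maps dom(Φ') bijectively onto dom(Φ), and Φ'(Φ(A)) = A for every A ∈ dom(Φ) while Φ(Φ'(B)) = B for every B ∈ dom(Φ'). -/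
open Matrix

section PhiInverseProof

variable {R : Type*} [Ring R]

private lemma rinv_rinv {M₀ : Type*} [MonoidWithZero M₀] {a : M₀} (h : IsUnit a) :
    Ring.inverse (Ring.inverse a) = a := by
  obtain ⟨u, rfl⟩ := h
  rw [Ring.inverse_unit, Ring.inverse_unit, inv_inv]

private lemma isUnit_rinv {M₀ : Type*} [MonoidWithZero M₀] {a : M₀} (h : IsUnit a) :
    IsUnit (Ring.inverse a) := by
  obtain ⟨u, rfl⟩ := h
  rw [Ring.inverse_unit]; exact Units.isUnit _

private lemma rinv_mul {M₀ : Type*} [MonoidWithZero M₀] {a b : M₀} (ha : IsUnit a)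
    (hb : IsUnit b) : Ring.inverse (a * b) = Ring.inverse b * Ring.inverse a := by
  obtain ⟨u, rfl⟩ := ha; obtain ⟨v, rfl⟩ := hb
  rw [← Units.val_mul, Ring.inverse_unit, Ring.inverse_unit, Ring.inverse_unit,
    _root_.mul_inv_rev, Units.val_mul]

private lemma J2_J2 {m' : Type*} {M : Matrix m' m' R} (h : ∀ j k, IsUnit (M j k)) :
    J2 (J2 M) = M := by
  ext j k
  simp only [J2, Matrix.of_apply]
  exact rinv_rinv (h j k)

variable {m : Type*} [Fintype m] [DecidableEq m]

private noncomputable def diagUnit (d : m → R) (hd : ∀ i, IsUnit (d i)) : (Matrix m m R)ˣ :=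
  ⟨Matrix.diagonal d, Matrix.diagonal fun i => Ring.inverse (d i),
    by rw [Matrix.diagonal_mul_diagonal]
       rw [show (fun i => d i * Ring.inverse (d i)) = fun _ => (1 : R) from
         funext fun i => Ring.mul_inverse_cancel _ (hd i), Matrix.diagonal_one],
    by rw [Matrix.diagonal_mul_diagonal]
       rw [show (fun i => Ring.inverse (d i) * d i) = fun _ => (1 : R) from
         funext fun i => Ring.inverse_mul_cancel _ (hd i), Matrix.diagonal_one]⟩

private lemma tri_apply (a b : m → R) (M : Matrix m m R) (j k : m) :
    (Matrix.diagonal a * M * Matrix.diagonal b) j k = a j * M j k * b k := by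
  rw [Matrix.mul_diagonal, Matrix.diagonal_mul]

private lemma tri_unit (d₁ d₂ : m → R) (hd₁ : ∀ i, IsUnit (d₁ i)) (hd₂ : ∀ i, IsUnit (d₂ i))
    {M : Matrix m m R} (hM : IsUnit M) :
    IsUnit (Matrix.diagonal d₁ * M * Matrix.diagonal d₂) ∧
      Ring.inverse (Matrix.diagonal d₁ * M * Matrix.diagonal d₂) =
        Matrix.diagonal (fun i => Ring.inverse (d₂ i)) * Ring.inverse M *
          Matrix.diagonal (fun i => Ring.inverse (d₁ i)) := by
  obtain ⟨u, hu⟩ := hM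
  set U : (Matrix m m R)ˣ := diagUnit d₁ hd₁ * u * diagUnit d₂ hd₂ with hUdef
  have h1 : Matrix.diagonal d₁ * M * Matrix.diagonal d₂ = U.val := by
    rw [hUdef, Units.val_mul, Units.val_mul, hu]; rfl
  have h2 : (U⁻¹).val =
      Matrix.diagonal (fun i => Ring.inverse (d₂ i)) * (u⁻¹).val *
        Matrix.diagonal (fun i => Ring.inverse (d₁ i)) := by
    rw [hUdef, _root_.mul_inv_rev, _root_.mul_inv_rev, Units.val_mul, Units.val_mul, mul_assoc]
    rfl
  refine ⟨by rw [h1]; exact Units.isUnit U, ?_⟩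
  rw [h1, Ring.inverse_unit, h2, ← hu, Ring.inverse_unit]

private lemma final1 {a x y c : R} (ha : IsUnit a) (hy : IsUnit y) (hc : IsUnit c) :
    Ring.inverse a * (a * x * (y * Ring.inverse c)) *
      Ring.inverse (c * (y * Ring.inverse c)) * c = x := by
  obtain ⟨u, rfl⟩ := ha; obtain ⟨v, rfl⟩ := hy; obtain ⟨w, rfl⟩ := hc
  have h1 : (w : R) * (↑v * Ring.inverse (w : R)) = ((w * v * w⁻¹ : Rˣ) : R) := by
    rw [Ring.inverse_unit]; simp [mul_assoc]
  rw [h1, Ring.inverse_unit, Ring.inverse_unit, Ring.inverse_unit]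
  simp [_root_.mul_inv_rev, mul_assoc]

private lemma final2 {a b : R} (ha : IsUnit a) (hb : IsUnit b) :
    Ring.inverse a * b * (Ring.inverse b * a) = 1 := by
  obtain ⟨u, rfl⟩ := ha; obtain ⟨v, rfl⟩ := hb
  rw [Ring.inverse_unit, Ring.inverse_unit]
  simp [mul_assoc]

private lemma final3 {a c x y : R} (ha : IsUnit a) (hc : IsUnit c) (hy : IsUnit y) :
    a * Ring.inverse (Ring.inverse a * c * a) * (Ring.inverse a * c * x * y) *
      Ring.inverse y = x := by
  obtain ⟨u, rfl⟩ := ha; obtain ⟨v, rfl⟩ := hc; obtain ⟨w, rfl⟩ := hy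
  have h1 : Ring.inverse ((u : R)) * ↑v * ↑u = ((u⁻¹ * v * u : Rˣ) : R) := by
    rw [Ring.inverse_unit]; rfl
  rw [h1, Ring.inverse_unit, Ring.inverse_unit, Ring.inverse_unit]
  simp [_root_.mul_inv_rev, mul_assoc]

variable [Zero m]

private lemma phi_fwd {A : Matrix m m R} (hA : domPhi A) :
    domPhiInv (Phi A) ∧ PhiInv (Phi A) = A := by
  obtain ⟨hMh, hent, hU, hC⟩ := hA
  set C := Ring.inverse A with hCdef
  set d₁ : m → R := fun j => C 0 0 * Ring.inverse (C j 0) with hd₁def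
  set d₂ : m → R := fun k => Ring.inverse (C 0 k) with hd₂def
  have hd₁ : ∀ i, IsUnit (d₁ i) := fun i => (hC 0 0).mul (isUnit_rinv (hC i 0))
  have hd₂ : ∀ i, IsUnit (d₂ i) := fun i => isUnit_rinv (hC 0 i)
  have hfac : LamL C = Matrix.diagonal d₁ * C * Matrix.diagonal d₂ := by
    ext j k; rw [tri_apply]; rfl
  have hCU : IsUnit C := isUnit_rinv hU
  have htri := tri_unit d₁ d₂ hd₁ hd₂ hCU
  have hrinvC : Ring.inverse C = A := rinv_rinv hU
  have hLent : ∀ j k, IsUnit (LamL C j k) := by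
    intro j k
    rw [hfac, tri_apply]
    exact ((hd₁ j).mul (hC j k)).mul (hd₂ k)
  have hJ2B : J2 (Phi A) = LamL C := J2_J2 hLent
  have hinvd₂ : (fun i => Ring.inverse (d₂ i)) = fun i => C 0 i :=
    funext fun i => rinv_rinv (hC 0 i)
  have hinvd₁ : (fun i => Ring.inverse (d₁ i)) = fun i => C i 0 * Ring.inverse (C 0 0) :=
    funext fun i => by
      rw [hd₁def]
      rw [rinv_mul (hC 0 0) (isUnit_rinv (hC i 0)), rinv_rinv (hC i 0)]
  have hEeq : Ring.inverse (J2 (Phi A)) =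
      Matrix.diagonal (fun i => C 0 i) * A * Matrix.diagonal
        (fun i => C i 0 * Ring.inverse (C 0 0)) := by
    rw [hJ2B, hfac, htri.2, hrinvC, hinvd₂, hinvd₁]
  have hE : ∀ j k, Ring.inverse (J2 (Phi A)) j k =
      C 0 j * A j k * (C k 0 * Ring.inverse (C 0 0)) := by
    intro j k; rw [hEeq, tri_apply]
  constructor
  · refine ⟨?_, ?_, ?_, ?_⟩
    · intro k
      constructor
      · show Ring.inverse (LamL C k 0) = 1
        show Ring.inverse (C 0 0 * Ring.inverse (C k 0) * C k 0 * Ring.inverse (C 0 0)) = 1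
        rw [mul_assoc (C 0 0), Ring.inverse_mul_cancel _ (hC k 0), mul_one,
          Ring.mul_inverse_cancel _ (hC 0 0), Ring.inverse_one]
      · show Ring.inverse (LamL C 0 k) = 1
        show Ring.inverse (C 0 0 * Ring.inverse (C 0 0) * C 0 k * Ring.inverse (C 0 k)) = 1
        rw [Ring.mul_inverse_cancel _ (hC 0 0), one_mul,
          Ring.mul_inverse_cancel _ (hC 0 k), Ring.inverse_one]
    · intro j k
      exact isUnit_rinv (hLent k j)
    · rw [hJ2B, hfac]; exact htri.1
    · intro j k
      rw [hE j k]
      exact ((hC 0 j).mul (hent j k)).mul ((hC k 0).mul (isUnit_rinv (hC 0 0)))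
  · ext j k
    show LamR (Ring.inverse (J2 (Phi A))) j k = A j k
    show Ring.inverse (Ring.inverse (J2 (Phi A)) j 0) * Ring.inverse (J2 (Phi A)) j k *
        Ring.inverse (Ring.inverse (J2 (Phi A)) 0 k) * Ring.inverse (J2 (Phi A)) 0 0 = A j k
    rw [hE j 0, hE j k, hE 0 k, hE 0 0,
      show A j 0 = 1 from (hMh j).2, show A 0 k = 1 from (hMh k).1,
      show A 0 0 = 1 from (hMh 0).1]
    simp only [mul_one]
    rw [Ring.mul_inverse_cancel _ (hC 0 0)]
    simp only [mul_one]
    exact final1 (hC 0 j) (hC k 0) (hC 0 0)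

private lemma phi_bwd {B : Matrix m m R} (hB : domPhiInv B) :
    domPhi (PhiInv B) ∧ Phi (PhiInv B) = B := by
  obtain ⟨hMh, hent, hFU, hEent⟩ := hB
  set F := J2 B with hFdef
  set E := Ring.inverse F with hEdef
  have hFent : ∀ j k, IsUnit (F j k) := fun j k => isUnit_rinv (hent k j)
  set d₁ : m → R := fun j => Ring.inverse (E j 0) with hd₁def
  set d₂ : m → R := fun k => Ring.inverse (E 0 k) * E 0 0 with hd₂def
  have hd₁ : ∀ i, IsUnit (d₁ i) := fun i => isUnit_rinv (hEent i 0)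
  have hd₂ : ∀ i, IsUnit (d₂ i) := fun i => (isUnit_rinv (hEent 0 i)).mul (hEent 0 0)
  have hfac : LamR E = Matrix.diagonal d₁ * E * Matrix.diagonal d₂ := by
    ext j k; rw [tri_apply]
    show Ring.inverse (E j 0) * E j k * Ring.inverse (E 0 k) * E 0 0 = _
    rw [mul_assoc (Ring.inverse (E j 0) * E j k)]
  have hEU : IsUnit E := isUnit_rinv hFU
  have htri := tri_unit d₁ d₂ hd₁ hd₂ hEU
  have hrinvE : Ring.inverse E = F := rinv_rinv hFU
  have hinvd₂ : (fun i => Ring.inverse (d₂ i)) = fun i => Ring.inverse (E 0 0) * E 0 i :=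
    funext fun i => by
      rw [hd₂def]
      rw [rinv_mul (isUnit_rinv (hEent 0 i)) (hEent 0 0), rinv_rinv (hEent 0 i)]
  have hinvd₁ : (fun i => Ring.inverse (d₁ i)) = fun i => E i 0 :=
    funext fun i => rinv_rinv (hEent i 0)
  have hAeq : PhiInv B = Matrix.diagonal d₁ * E * Matrix.diagonal d₂ := hfac
  have hA : ∀ j k, PhiInv B j k = d₁ j * E j k * d₂ k := by
    intro j k; rw [hAeq, tri_apply]
  have hCeq : Ring.inverse (PhiInv B) =
      Matrix.diagonal (fun i => Ring.inverse (E 0 0) * E 0 i) * F *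
        Matrix.diagonal (fun i => E i 0) := by
    rw [hAeq, htri.2, hrinvE, hinvd₂, hinvd₁]
  have hCap : ∀ j k, Ring.inverse (PhiInv B) j k =
      Ring.inverse (E 0 0) * E 0 j * F j k * E k 0 := by
    intro j k; rw [hCeq, tri_apply]
  have hF0 : ∀ j, F j 0 = 1 := fun j => by
    show Ring.inverse (B 0 j) = 1
    rw [(hMh j).1, Ring.inverse_one]
  have hF0' : ∀ k, F 0 k = 1 := fun k => by
    show Ring.inverse (B k 0) = 1
    rw [(hMh k).2, Ring.inverse_one]
  have hdomA : domPhi (PhiInv B) := by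
    refine ⟨?_, ?_, ?_, ?_⟩
    · intro k
      constructor
      · simp only [hA 0 k, hd₁def, hd₂def]
        exact final2 (hEent 0 0) (hEent 0 k)
      · simp only [hA k 0, hd₁def, hd₂def]
        rw [Ring.inverse_mul_cancel _ (hEent k 0), one_mul,
          Ring.inverse_mul_cancel _ (hEent 0 0)]
    · intro j k
      rw [hA j k]
      exact ((hd₁ j).mul (hEent j k)).mul (hd₂ k)
    · rw [hAeq]; exact htri.1
    · intro j k
      rw [hCap j k]
      exact (((isUnit_rinv (hEent 0 0)).mul (hEent 0 j)).mul (hFent j k)).mul (hEent k 0)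
  refine ⟨hdomA, ?_⟩
  have hLam : ∀ j k, LamL (Ring.inverse (PhiInv B)) j k = F j k := by
    intro j k
    show Ring.inverse (PhiInv B) 0 0 * Ring.inverse (Ring.inverse (PhiInv B) j 0) *
        Ring.inverse (PhiInv B) j k * Ring.inverse (Ring.inverse (PhiInv B) 0 k) = F j k
    rw [hCap 0 0, hCap j 0, hCap j k, hCap 0 k, hF0 j, hF0 0, hF0' k]
    simp only [mul_one]
    rw [Ring.inverse_mul_cancel _ (hEent 0 0)]
    simp only [one_mul]
    exact final3 (hEent 0 0) (hEent 0 j) (hEent k 0)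
  ext j k
  show Ring.inverse (LamL (Ring.inverse (PhiInv B)) k j) = B j k
  rw [hLam k j]
  show Ring.inverse (Ring.inverse (B j k)) = B j k
  exact rinv_rinv (hent j k)

end PhiInverseProof

/-- `Φ'` is the inverse of `Φ`: `Φ` maps `dom(Φ)` bijectively onto
`dom(Φ')`, `Φ'` maps `dom(Φ')` bijectively onto `dom(Φ)`, and the two compositions are
the identity on the respective domains. -/
theorem phi_inverse {R : Type*} [Ring R] (n : ℕ) :
    Set.BijOn Phi {A : Matrix (Fin (n + 1)) (Fin (n + 1)) R | domPhi A} {B | domPhiInv B} ∧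
    Set.BijOn PhiInv {B : Matrix (Fin (n + 1)) (Fin (n + 1)) R | domPhiInv B} {A | domPhi A} ∧
    (∀ A : Matrix (Fin (n + 1)) (Fin (n + 1)) R, domPhi A → PhiInv (Phi A) = A) ∧
    (∀ B : Matrix (Fin (n + 1)) (Fin (n + 1)) R, domPhiInv B → Phi (PhiInv B) = B) := by
  refine ⟨?_, ?_, fun A hA => (phi_fwd hA).2, fun B hB => (phi_bwd hB).2⟩
  · exact Set.InvOn.bijOn ⟨fun A hA => (phi_fwd hA).2, fun B hB => (phi_bwd hB).2⟩
      (fun A hA => (phi_fwd hA).1) (fun B hB => (phi_bwd hB).1)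
  · exact Set.InvOn.bijOn ⟨fun B hB => (phi_bwd hB).2, fun A hA => (phi_fwd hA).2⟩
      (fun B hB => (phi_bwd hB).1) (fun A hA => (phi_fwd hA).1)
end

section
/- Let R be a unital associative ring, n ≥ 1, and let (P₁, P₂) be a pair of n×n permutation matrices each of which fixes the first standard basis vector. Then dom(Φ) and dom(Ψ) are stable under the action M ↦ P₁⁻¹ M P₂, and both Φ and Ψ commute with this action: Φ(P₁⁻¹ A P₂) = P₁⁻¹ Φ(A) P₂ for every A ∈ dom(Φ), and Ψ(P₁⁻¹ A P₂) = P₁⁻¹ Ψ(A) P₂ for every A ∈ dom(Ψ). -/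
open Matrix

/-!
Conjugating by permutation matrices only reindexes rows and columns:
`P_σ⁻¹ A P_τ = A(σ⁻¹ ·, τ⁻¹ ·)`. Invertibility of the matrix and of its entries, the entrywise
operation `J₂` and matrix inversion are all compatible with reindexing by bijections, and `Λ^L` and
`M̂ₙ(R)` are too as long as the bijections fix the index `1`, which they use as a base point.
-/

namespace Matrix

variable {R : Type*} [Semiring R] {m n : Type*} [Fintype m] [DecidableEq m]
  [Fintype n] [DecidableEq n]

lemma _root_.IsUnit.submatrix_equiv {A : Matrix m m R} (hA : IsUnit A) (e₁ e₂ : n ≃ m) :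
    IsUnit (A.submatrix e₁ e₂) := by
  obtain ⟨u, rfl⟩ := hA
  refine ⟨⟨(u : Matrix m m R).submatrix e₁ e₂, (↑u⁻¹ : Matrix m m R).submatrix e₂ e₁, ?_, ?_⟩,
    rfl⟩ <;> simp only [submatrix_mul_equiv, Units.mul_inv, Units.inv_mul, submatrix_one_equiv]

lemma isUnit_submatrix_equiv_iff {A : Matrix m m R} (e₁ e₂ : n ≃ m) :
    IsUnit (A.submatrix e₁ e₂) ↔ IsUnit A :=
  ⟨fun h => by simpa using h.submatrix_equiv e₁.symm e₂.symm, fun h => h.submatrix_equiv e₁ e₂⟩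

lemma ringInverse_submatrix_equiv (A : Matrix m m R) (e₁ e₂ : n ≃ m) :
    Ring.inverse (A.submatrix e₁ e₂) = (Ring.inverse A).submatrix e₂ e₁ := by
  by_cases hA : IsUnit A
  · symm
    rw [← one_mul (Ring.inverse (A.submatrix e₁ e₂)),
      Ring.eq_mul_inverse_iff_mul_eq _ _ _ (hA.submatrix_equiv e₁ e₂), submatrix_mul_equiv,
      Ring.inverse_mul_cancel _ hA, submatrix_one_equiv]
  · rw [Ring.inverse_non_unit _ hA, Ring.inverse_non_unit _ (by rwa [isUnit_submatrix_equiv_iff])]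
    rfl

lemma ringInverse_permMatrix (σ : Equiv.Perm m) :
    Ring.inverse (σ.permMatrix R) = σ⁻¹.permMatrix R := by
  have h := Ring.inverse_unit ((permMatrixHom (n := m) (R := R)).toHomUnits σ⁻¹)
  rw [← map_inv] at h
  simpa only [MonoidHom.coe_toHomUnits, permMatrixHom_apply, inv_inv] using h

lemma ringInverse_permMatrix_mul_mul_permMatrix (σ τ : Equiv.Perm m) (A : Matrix m m R) :
    Ring.inverse (σ.permMatrix R) * A * τ.permMatrix R = A.submatrix ⇑σ⁻¹ ⇑τ⁻¹ := by
  rw [ringInverse_permMatrix, PEquiv.toMatrix_toPEquiv_mul, PEquiv.mul_toMatrix_toPEquiv,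
    submatrix_submatrix]
  rfl

end Matrix

section Reindex

variable {R : Type*} [Ring R] {m : Type*}

lemma J2_submatrix (A : Matrix m m R) (e f : m → m) :
    J2 (A.submatrix e f) = (J2 A).submatrix f e :=
  rfl

variable [Zero m] {e f : m → m}

lemma Mhat.submatrix {A : Matrix m m R} (hA : Mhat A) (he : e 0 = 0) (hf : f 0 = 0) :
    Mhat (A.submatrix e f) := fun k => by
  simpa [he, hf] using And.intro (hA (f k)).1 (hA (e k)).2

lemma LamL_submatrix (A : Matrix m m R) (he : e 0 = 0) (hf : f 0 = 0) :
    LamL (A.submatrix e f) = (LamL A).submatrix e f := by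
  ext i j
  simp [LamL, he, hf]

end Reindex

section PermReindex

variable {R : Type*} [Ring R] {m : Type*} [Zero m] [Fintype m] [DecidableEq m]
  {σ τ : Equiv.Perm m}

lemma Phi_submatrix (A : Matrix m m R) (hσ : σ 0 = 0) (hτ : τ 0 = 0) :
    Phi (A.submatrix σ τ) = (Phi A).submatrix σ τ := by
  rw [Phi, Matrix.ringInverse_submatrix_equiv, LamL_submatrix _ hτ hσ, J2_submatrix, Phi]

lemma Psi_submatrix (A : Matrix m m R) (hσ : σ 0 = 0) (hτ : τ 0 = 0) :
    Psi (A.submatrix σ τ) = (Psi A).submatrix σ τ := by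
  rw [Psi, J2_submatrix, Phi_submatrix _ hτ hσ, J2_submatrix, Psi]

lemma domPhi.submatrix {A : Matrix m m R} (hA : domPhi A) (hσ : σ 0 = 0) (hτ : τ 0 = 0) :
    domPhi (A.submatrix σ τ) := by
  obtain ⟨hMhat, hentries, hunit, hinv⟩ := hA
  refine ⟨hMhat.submatrix hσ hτ, fun j k => hentries _ _, hunit.submatrix_equiv σ τ, ?_⟩
  rw [Matrix.ringInverse_submatrix_equiv]
  exact fun j k => hinv _ _

lemma domPsi.submatrix {A : Matrix m m R} (hA : domPsi A) (hσ : σ 0 = 0) (hτ : τ 0 = 0) :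
    domPsi (A.submatrix σ τ) := by
  obtain ⟨hMhat, hentries, hJ2⟩ := hA
  exact ⟨hMhat.submatrix hσ hτ, fun j k => hentries _ _, hJ2.submatrix hτ hσ⟩

end PermReindex

/-- Symmetry lemma. Let `P₁ = permMatrix σ`, `P₂ = permMatrix τ` be
permutation matrices fixing the first standard basis vector (`σ 0 = 0`, `τ 0 = 0`).
Then `dom(Φ)` and `dom(Ψ)` are stable under `M ↦ P₁⁻¹ M P₂`, and `Φ`, `Ψ` commute with
this action. -/
theorem symmetry_lemma {R : Type*} [Ring R] (n : ℕ)
    (σ τ : Equiv.Perm (Fin (n + 1))) (hσ : σ 0 = 0) (hτ : τ 0 = 0) :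
    (∀ A : Matrix (Fin (n + 1)) (Fin (n + 1)) R, domPhi A →
      domPhi (Ring.inverse (σ.permMatrix R) * A * τ.permMatrix R)) ∧
    (∀ A : Matrix (Fin (n + 1)) (Fin (n + 1)) R, domPsi A →
      domPsi (Ring.inverse (σ.permMatrix R) * A * τ.permMatrix R)) ∧
    (∀ A : Matrix (Fin (n + 1)) (Fin (n + 1)) R, domPhi A →
      Phi (Ring.inverse (σ.permMatrix R) * A * τ.permMatrix R) =
        Ring.inverse (σ.permMatrix R) * Phi A * τ.permMatrix R) ∧
    (∀ A : Matrix (Fin (n + 1)) (Fin (n + 1)) R, domPsi A →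
      Psi (Ring.inverse (σ.permMatrix R) * A * τ.permMatrix R) =
        Ring.inverse (σ.permMatrix R) * Psi A * τ.permMatrix R) := by
  have hσ' : σ⁻¹ 0 = 0 := Equiv.Perm.inv_eq_iff_eq.2 hσ.symm
  have hτ' : τ⁻¹ 0 = 0 := Equiv.Perm.inv_eq_iff_eq.2 hτ.symm
  simp only [Matrix.ringInverse_permMatrix_mul_mul_permMatrix]
  exact ⟨fun A hA => hA.submatrix hσ' hτ', fun A hA => hA.submatrix hσ' hτ',
    fun A _ => Phi_submatrix A hσ' hτ', fun A _ => Psi_submatrix A hσ' hτ'⟩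
end

section
/- Let R be a unital associative ring and let a, b, c, d be invertible elements of R. Then: (a) a − b is invertible if and only if a⁻¹ − b⁻¹ is invertible; (b) if a − b is invertible, then a(a−b)⁻¹b = b(a−b)⁻¹a = (b⁻¹ − a⁻¹)⁻¹; (c) if d − c and b − a are invertible, then db⁻¹ − ca⁻¹ is invertible if and only if (d−c)⁻¹c − (b−a)⁻¹a is invertible; (d) if d − c, b − a, a − 1, b − 1, c − 1 and d − 1 are invertible, then (d−1)(b−1)⁻¹ − (c−1)(a−1)⁻¹ is invertible if and only if (d−c)⁻¹(c−1) − (b−a)⁻¹(a−1) is invertible; (e) if d − c, b − a, a − 1, b − 1, c − 1 and d − 1 are invertible, then (d⁻¹−1)(c⁻¹−1)⁻¹ − (b⁻¹−1)(a⁻¹−1)⁻¹ is invertible if and only if (c−1)(d−c)⁻¹d − (a−1)(b−a)⁻¹b is invertible. -/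
open Matrix

/-!
Everything reduces to the identity `a⁻¹ - b⁻¹ = a⁻¹ (b - a) b⁻¹`, which gives (a) and, after
inverting, (b). For (c) write `d b⁻¹ - c a⁻¹ = c (c⁻¹ d - a⁻¹ b) b⁻¹` and
`c⁻¹ d - a⁻¹ b = (c⁻¹ d - 1) - (a⁻¹ b - 1)`, where `c⁻¹ d - 1 = ((d - c)⁻¹ c)⁻¹`, so that (a)
applies. (d) is (c) for `a - 1, …, d - 1`. (e) is the mirror image of (c), for `d c⁻¹ - b a⁻¹`,
applied to `a⁻¹ - 1, …, d⁻¹ - 1`, after which (b) turns `(a⁻¹ - 1) (b⁻¹ - a⁻¹)⁻¹` into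
`(a - 1) (b - a)⁻¹ b`.
-/

open scoped Ring

namespace Ring

variable {R : Type*} [Ring R] {a b c d : R}

theorem inverse_neg (x : R) : (-x)⁻¹ʳ = -x⁻¹ʳ := by
  by_cases hx : IsUnit x
  · obtain ⟨u, rfl⟩ := hx
    rw [← Units.val_neg, inverse_unit, inverse_unit, inv_neg, Units.val_neg]
  · rw [inverse_non_unit x hx, inverse_non_unit (-x) (by rwa [IsUnit.neg_iff]), neg_zero]

theorem inverse_sub_inverse' (ha : IsUnit a) (hb : IsUnit b) :
    a⁻¹ʳ - b⁻¹ʳ = b⁻¹ʳ * (b - a) * a⁻¹ʳ := by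
  rw [mul_sub, sub_mul, inverse_mul_cancel _ hb, one_mul, mul_inverse_cancel_right _ _ ha]

theorem isUnit_inverse_sub_inverse_iff (ha : IsUnit a) (hb : IsUnit b) :
    IsUnit (a⁻¹ʳ - b⁻¹ʳ) ↔ IsUnit (a - b) := by
  rw [inverse_sub_inverse (iff_of_true ha hb), hb.ringInverse.mul_right_iff,
    ha.ringInverse.mul_left_iff, ← neg_sub, IsUnit.neg_iff]

theorem inverse_inverse_sub_inverse (ha : IsUnit a) (hb : IsUnit b) :
    (b⁻¹ʳ - a⁻¹ʳ)⁻¹ʳ = a * (a - b)⁻¹ʳ * b := by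
  rw [inverse_sub_inverse (iff_of_true hb ha), inverse_mul (.inr ha.ringInverse),
    inverse_mul (.inl hb.ringInverse), inverse_inverse ha, inverse_inverse hb, mul_assoc]

theorem inverse_inverse_sub_inverse' (ha : IsUnit a) (hb : IsUnit b) :
    (b⁻¹ʳ - a⁻¹ʳ)⁻¹ʳ = b * (a - b)⁻¹ʳ * a := by
  rw [inverse_sub_inverse' hb ha, inverse_mul (.inr hb.ringInverse),
    inverse_mul (.inl ha.ringInverse), inverse_inverse ha, inverse_inverse hb, mul_assoc]

theorem inverse_sub_one_mul_inverse_inverse_sub_inverse (ha : IsUnit a) (hb : IsUnit b) :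
    (a⁻¹ʳ - 1) * (b⁻¹ʳ - a⁻¹ʳ)⁻¹ʳ = (a - 1) * (b - a)⁻¹ʳ * b := by
  rw [inverse_inverse_sub_inverse ha hb, ← mul_assoc, ← mul_assoc, sub_mul,
    inverse_mul_cancel _ ha, one_mul, ← neg_sub b a, inverse_neg, mul_neg, ← neg_mul,
    neg_sub]

theorem isUnit_inverse_sub_one (ha : IsUnit a) (ha₁ : IsUnit (a - 1)) : IsUnit (a⁻¹ʳ - 1) := by
  simpa only [inverse_one] using (isUnit_inverse_sub_inverse_iff ha isUnit_one).2 ha₁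

theorem inverse_mul_sub_one (hc : IsUnit c) (hdc : IsUnit (d - c)) :
    c⁻¹ʳ * d - 1 = ((d - c)⁻¹ʳ * c)⁻¹ʳ := by
  rw [inverse_mul (.inr hc), inverse_inverse hdc, mul_sub, inverse_mul_cancel _ hc]

theorem mul_inverse_sub_one (hc : IsUnit c) (hdc : IsUnit (d - c)) :
    d * c⁻¹ʳ - 1 = (c * (d - c)⁻¹ʳ)⁻¹ʳ := by
  rw [inverse_mul (.inl hc), inverse_inverse hdc, sub_mul, mul_inverse_cancel _ hc]

theorem isUnit_inverse_mul_sub_inverse_mul_iff (ha : IsUnit a) (hc : IsUnit c)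
    (hba : IsUnit (b - a)) (hdc : IsUnit (d - c)) :
    IsUnit (c⁻¹ʳ * d - a⁻¹ʳ * b) ↔ IsUnit ((d - c)⁻¹ʳ * c - (b - a)⁻¹ʳ * a) := by
  rw [← sub_sub_sub_cancel_right _ _ 1, inverse_mul_sub_one hc hdc, inverse_mul_sub_one ha hba,
    isUnit_inverse_sub_inverse_iff (hdc.ringInverse.mul hc) (hba.ringInverse.mul ha)]

theorem isUnit_mul_inverse_sub_mul_inverse_iff (ha : IsUnit a) (hc : IsUnit c)
    (hba : IsUnit (b - a)) (hdc : IsUnit (d - c)) :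
    IsUnit (d * c⁻¹ʳ - b * a⁻¹ʳ) ↔ IsUnit (c * (d - c)⁻¹ʳ - a * (b - a)⁻¹ʳ) := by
  rw [← sub_sub_sub_cancel_right _ _ 1, mul_inverse_sub_one hc hdc, mul_inverse_sub_one ha hba,
    isUnit_inverse_sub_inverse_iff (hc.mul hdc.ringInverse) (ha.mul hba.ringInverse)]

theorem isUnit_mul_inverse_sub_mul_inverse_cross_iff (ha : IsUnit a) (hb : IsUnit b)
    (hc : IsUnit c) (hba : IsUnit (b - a)) (hdc : IsUnit (d - c)) :
    IsUnit (d * b⁻¹ʳ - c * a⁻¹ʳ) ↔ IsUnit ((d - c)⁻¹ʳ * c - (b - a)⁻¹ʳ * a) := by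
  have factor : d * b⁻¹ʳ - c * a⁻¹ʳ = c * (c⁻¹ʳ * d - a⁻¹ʳ * b) * b⁻¹ʳ := by
    simp only [mul_sub, sub_mul, mul_assoc, mul_inverse_cancel_left _ _ hc,
      mul_inverse_cancel _ hb, mul_one]
  rw [factor, hb.ringInverse.mul_right_iff, hc.mul_left_iff,
    isUnit_inverse_mul_sub_inverse_mul_iff ha hc hba hdc]

theorem isUnit_inverse_sub_one_mul_inverse_sub_iff (ha : IsUnit a) (hb : IsUnit b)
    (hc : IsUnit c) (hd : IsUnit d) (ha₁ : IsUnit (a - 1)) (hc₁ : IsUnit (c - 1))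
    (hba : IsUnit (b - a)) (hdc : IsUnit (d - c)) :
    IsUnit ((d⁻¹ʳ - 1) * (c⁻¹ʳ - 1)⁻¹ʳ - (b⁻¹ʳ - 1) * (a⁻¹ʳ - 1)⁻¹ʳ) ↔
      IsUnit ((c - 1) * (d - c)⁻¹ʳ * d - (a - 1) * (b - a)⁻¹ʳ * b) := by
  have hBA : IsUnit ((b⁻¹ʳ - 1) - (a⁻¹ʳ - 1)) := by
    rwa [sub_sub_sub_cancel_right, isUnit_inverse_sub_inverse_iff hb ha]
  have hDC : IsUnit ((d⁻¹ʳ - 1) - (c⁻¹ʳ - 1)) := by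
    rwa [sub_sub_sub_cancel_right, isUnit_inverse_sub_inverse_iff hd hc]
  rw [isUnit_mul_inverse_sub_mul_inverse_iff (isUnit_inverse_sub_one ha ha₁)
      (isUnit_inverse_sub_one hc hc₁) hBA hDC, sub_sub_sub_cancel_right,
    sub_sub_sub_cancel_right, inverse_sub_one_mul_inverse_inverse_sub_inverse ha hb,
    inverse_sub_one_mul_inverse_inverse_sub_inverse hc hd]

end Ring

open Ring

/-- Noncommutative identities for invertible `a, b, c, d ∈ R`:
(a) `a − b` invertible iff `a⁻¹ − b⁻¹` invertible;
(b) if `a − b` invertible, then `a(a−b)⁻¹b = b(a−b)⁻¹a = (b⁻¹ − a⁻¹)⁻¹`;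
(c) if `d − c`, `b − a` invertible, then `db⁻¹ − ca⁻¹` invertible iff
    `(d−c)⁻¹c − (b−a)⁻¹a` invertible;
(d) if `d − c`, `b − a`, `a − 1`, `b − 1`, `c − 1`, `d − 1` invertible, then
    `(d−1)(b−1)⁻¹ − (c−1)(a−1)⁻¹` invertible iff `(d−c)⁻¹(c−1) − (b−a)⁻¹(a−1)` invertible;
(e) under the same hypotheses, `(d⁻¹−1)(c⁻¹−1)⁻¹ − (b⁻¹−1)(a⁻¹−1)⁻¹` invertible iff
    `(c−1)(d−c)⁻¹d − (a−1)(b−a)⁻¹b` invertible. -/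
theorem noncommutative_identities {R : Type*} [Ring R] (a b c d : R)
    (ha : IsUnit a) (hb : IsUnit b) (hc : IsUnit c) (hd : IsUnit d) :
    (IsUnit (a - b) ↔ IsUnit (Ring.inverse a - Ring.inverse b)) ∧
    (IsUnit (a - b) →
      a * Ring.inverse (a - b) * b = b * Ring.inverse (a - b) * a ∧
      a * Ring.inverse (a - b) * b = Ring.inverse (Ring.inverse b - Ring.inverse a)) ∧
    (IsUnit (d - c) → IsUnit (b - a) →
      (IsUnit (d * Ring.inverse b - c * Ring.inverse a) ↔
        IsUnit (Ring.inverse (d - c) * c - Ring.inverse (b - a) * a))) ∧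
    (IsUnit (d - c) → IsUnit (b - a) → IsUnit (a - 1) → IsUnit (b - 1) → IsUnit (c - 1) →
      IsUnit (d - 1) →
      (IsUnit ((d - 1) * Ring.inverse (b - 1) - (c - 1) * Ring.inverse (a - 1)) ↔
        IsUnit (Ring.inverse (d - c) * (c - 1) - Ring.inverse (b - a) * (a - 1)))) ∧
    (IsUnit (d - c) → IsUnit (b - a) → IsUnit (a - 1) → IsUnit (b - 1) → IsUnit (c - 1) →
      IsUnit (d - 1) →
      (IsUnit ((Ring.inverse d - 1) * Ring.inverse (Ring.inverse c - 1) -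
          (Ring.inverse b - 1) * Ring.inverse (Ring.inverse a - 1)) ↔
        IsUnit ((c - 1) * Ring.inverse (d - c) * d - (a - 1) * Ring.inverse (b - a) * b))) := by
  refine ⟨(isUnit_inverse_sub_inverse_iff ha hb).symm,
    fun _ => ⟨(inverse_inverse_sub_inverse ha hb).symm.trans (inverse_inverse_sub_inverse' ha hb),
      (inverse_inverse_sub_inverse ha hb).symm⟩,
    fun hdc hba => isUnit_mul_inverse_sub_mul_inverse_cross_iff ha hb hc hba hdc,
    fun hdc hba ha₁ hb₁ hc₁ _ => ?_,
    fun hdc hba ha₁ _ hc₁ _ =>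
      isUnit_inverse_sub_one_mul_inverse_sub_iff ha hb hc hd ha₁ hc₁ hba hdc⟩
  have shifted := isUnit_mul_inverse_sub_mul_inverse_cross_iff ha₁ hb₁ hc₁ (d := d - 1)
    (by rwa [sub_sub_sub_cancel_right]) (by rwa [sub_sub_sub_cancel_right])
  rwa [sub_sub_sub_cancel_right, sub_sub_sub_cancel_right] at shifted
end
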